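/- arXiv:2409.00709 — 2 statements merged into one kernel-verified Lean document; each statement's English description precedes it below -/
import Mathlib

section
/- Let β ⊆ α be compositions with N = |α|−|β| ≥ 1. Then S^{row}_{α/β} ∈ SET(α/β), and for every T ∈ SET(α/β) with T ≠ S^{row}_{α/β} there exist indices j_1, …, j_r (1 ≤ j_i ≤ N−1) and pairwise distinct tableaux T_0 = T, T_1, …, T_r = S^{row}_{α/β}, all lying in SET(α/β), such that π_{j_i}^{rdI}(T_{i−1}) = T_i for i = 1, …, r. Hence S^{row}_{α/β} is the unique maximal element of the subposet of SIT(α/β) (ordered by reachability under the operators π_i^{rdI}) induced on SET(α/β). -/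
open scoped Classical

namespace ImmaculateSkew

/-- `part α i` is the `i`-th part (0-indexed) of the composition `α`, or `0` if out of range. -/
def part (α : List ℕ) (i : ℕ) : ℕ := α.getD i 0

/-- a composition: a list of positive integers -/
def IsComposition (α : List ℕ) : Prop := ∀ x ∈ α, 0 < x

/-- `β ⊆ α` for compositions -/
def SubComp (β α : List ℕ) : Prop :=
  β.length ≤ α.length ∧ ∀ j < β.length, part β j ≤ part α j

/-- cell `(i, j)` (row `i` from the bottom, column `j`, both 0-indexed) lies in the diagram of `α` -/
def InDiagram (α : List ℕ) (c : ℕ × ℕ) : Prop :=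
  c.1 < α.length ∧ c.2 < part α c.1

/-- cell lies in the skew diagram `α/β` -/
def InSkew (α β : List ℕ) (c : ℕ × ℕ) : Prop :=
  InDiagram α c ∧ ¬ InDiagram β c

/-- the finite set of cells of the skew diagram `α/β` -/
noncomputable def skewCells (α β : List ℕ) : Finset (ℕ × ℕ) :=
  (Finset.range α.length ×ˢ Finset.range (α.sum + 1)).filter (InSkew α β)

/-- `N = |α| - |β|` -/
def skewSize (α β : List ℕ) : ℕ := α.sum - β.sum

/-- a filling of the cells of `α/β` using each entry of `E` exactly once, zero off the diagram -/
structure IsStdOn (α β : List ℕ) (E : Finset ℕ) (T : ℕ × ℕ → ℕ) : Prop where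
  zero_off : ∀ c, ¬ InSkew α β c → T c = 0
  mem : ∀ c, InSkew α β c → T c ∈ E
  inj : ∀ c c', InSkew α β c → InSkew α β c' → T c = T c' → c = c'
  surj : ∀ v ∈ E, ∃ c, InSkew α β c ∧ T c = v

/-- row entries strictly increase left to right -/
def RowsStrict (α β : List ℕ) (T : ℕ × ℕ → ℕ) : Prop :=
  ∀ i j j', j < j' → InSkew α β (i, j) → InSkew α β (i, j') → T (i, j) < T (i, j')

/-- row entries weakly increase left to right -/
def RowsWeak (α β : List ℕ) (T : ℕ × ℕ → ℕ) : Prop :=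
  ∀ i j j', j < j' → InSkew α β (i, j) → InSkew α β (i, j') → T (i, j) ≤ T (i, j')

/-- all column entries strictly increase bottom to top -/
def ColsStrict (α β : List ℕ) (T : ℕ × ℕ → ℕ) : Prop :=
  ∀ i i' j, i < i' → InSkew α β (i, j) → InSkew α β (i', j) → T (i, j) < T (i', j)

/-- all column entries weakly increase bottom to top -/
def ColsWeak (α β : List ℕ) (T : ℕ × ℕ → ℕ) : Prop :=
  ∀ i i' j, i < i' → InSkew α β (i, j) → InSkew α β (i', j) → T (i, j) ≤ T (i', j)

/-- the column-1 entries (those in `α/β`) strictly increase bottom to top -/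
def FirstColStrict (α β : List ℕ) (T : ℕ × ℕ → ℕ) : Prop :=
  ∀ i i', i < i' → InSkew α β (i, 0) → InSkew α β (i', 0) → T (i, 0) < T (i', 0)

/-- the column-1 entries (those in `α/β`) weakly increase bottom to top -/
def FirstColWeak (α β : List ℕ) (T : ℕ × ℕ → ℕ) : Prop :=
  ∀ i i', i < i' → InSkew α β (i, 0) → InSkew α β (i', 0) → T (i, 0) ≤ T (i', 0)

/-- standard immaculate tableau of shape `α/β` with entry set `E` -/
def IsSITOn (α β : List ℕ) (E : Finset ℕ) (T : ℕ × ℕ → ℕ) : Prop :=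
  IsStdOn α β E T ∧ RowsStrict α β T ∧ FirstColStrict α β T

/-- standard immaculate tableau of shape `α/β` (entries `1, …, N`) -/
def IsSIT (α β : List ℕ) (T : ℕ × ℕ → ℕ) : Prop :=
  IsSITOn α β (Finset.Icc 1 (skewSize α β)) T

/-- standard extended tableau: all columns increase bottom to top -/
def IsSET (α β : List ℕ) (T : ℕ × ℕ → ℕ) : Prop :=
  IsSIT α β T ∧ ColsStrict α β T

/-- the four descent-set variants -/
inductive Variant | dI | rdI | Astar | Abar

/-- `rowRel a r r'`: the relation required between the row `r` containing `i` and the row `r'`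
containing `i+1` for `i` to be an `a`-descent -/
def rowRel : Variant → ℕ → ℕ → Prop
  | .dI    => fun r r' => r < r'
  | .rdI   => fun r r' => r' ≤ r
  | .Astar => fun r r' => r' < r
  | .Abar  => fun r r' => r ≤ r'

/-- the `a`-descent set of a tableau -/
noncomputable def Des (a : Variant) (α β : List ℕ) (T : ℕ × ℕ → ℕ) : Finset ℕ :=
  (Finset.Icc 1 (skewSize α β - 1)).filter fun k =>
    ∃ c c', InSkew α β c ∧ InSkew α β c' ∧ T c = k ∧ T c' = k + 1 ∧ rowRel a c.1 c'.1

/-- interchange the entries `i` and `i+1` -/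
def swapEntries (i : ℕ) (T : ℕ × ℕ → ℕ) : ℕ × ℕ → ℕ :=
  fun c => if T c = i then i + 1 else if T c = i + 1 then i else T c

/-- the 0-Hecke operator `π_i^a` on `SIT(α/β) ∪ {0}` (the zero function plays the role of `0`) -/
noncomputable def piOp (a : Variant) (α β : List ℕ) (i : ℕ) (T : ℕ × ℕ → ℕ) : ℕ × ℕ → ℕ :=
  if i ∈ Des a α β T then
    (if IsSIT α β (swapEntries i T) then swapEntries i T else fun _ => 0)
  else T

/-- the fundamental quasisymmetric function `F_{comp(D)}` for `D ⊆ {1,…,N-1}`, as a power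
series in the variables `x_1, x_2, …` (variable `x_n` is `X n`; `x_0` is unused) -/
noncomputable def Fund (N : ℕ) (D : Finset ℕ) : MvPowerSeries ℕ ℚ :=
  fun d => (Nat.card {f : Fin N → ℕ //
    (∀ j, 1 ≤ f j) ∧
    (∀ j k : Fin N, j ≤ k → f j ≤ f k) ∧
    (∀ (j : ℕ) (_ : 1 ≤ j) (h2 : j < N), j ∈ D → f ⟨j - 1, by omega⟩ < f ⟨j, h2⟩) ∧
    (∑ j, Finsupp.single (f j) 1) = d} : ℚ)

/-- the generating function `Σ_T x^T` over all fillings of the given cells with positive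
integers satisfying the predicate `P` (and equal to `0` off the given cells) -/
noncomputable def genF (cs : Finset (ℕ × ℕ)) (P : (ℕ × ℕ → ℕ) → Prop) :
    MvPowerSeries ℕ ℚ :=
  fun d => (Nat.card {T : ℕ × ℕ → ℕ //
    (∀ c, c ∉ cs → T c = 0) ∧ (∀ c ∈ cs, 1 ≤ T c) ∧ P T ∧
    (∑ c ∈ cs, Finsupp.single (T c) 1) = d} : ℚ)

/-- complete homogeneous symmetric function `h_r` -/
noncomputable def hFun (r : ℕ) : MvPowerSeries ℕ ℚ :=
  fun d => (Nat.card {f : Fin r → ℕ //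
    (∀ j, 1 ≤ f j) ∧ (∀ j k : Fin r, j ≤ k → f j ≤ f k) ∧
    (∑ j, Finsupp.single (f j) 1) = d} : ℚ)

/-- elementary symmetric function `e_r` -/
noncomputable def eFun (r : ℕ) : MvPowerSeries ℕ ℚ :=
  fun d => (Nat.card {f : Fin r → ℕ //
    (∀ j, 1 ≤ f j) ∧ (∀ j k : Fin r, j < k → f j < f k) ∧
    (∑ j, Finsupp.single (f j) 1) = d} : ℚ)

/-- send a filling to the corresponding basis vector of the free `ℚ`-vector space on
`SIT(α/β)`, or to the zero vector if it is not a standard immaculate tableau -/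
noncomputable def toBasis (α β : List ℕ) (U : ℕ × ℕ → ℕ) :
    ({T : ℕ × ℕ → ℕ // IsSIT α β T} →₀ ℚ) :=
  if h : IsSIT α β U then Finsupp.single ⟨U, h⟩ 1 else 0

/-- the linear extension of `π_i^a` to the free `ℚ`-vector space on `SIT(α/β)` -/
noncomputable def piLin (a : Variant) (α β : List ℕ) (i : ℕ) :
    ({T : ℕ × ℕ → ℕ // IsSIT α β T} →₀ ℚ) →ₗ[ℚ]
      ({T : ℕ × ℕ → ℕ // IsSIT α β T} →₀ ℚ) :=
  Finsupp.lift _ ℚ _ (fun T => toBasis α β (piOp a α β i T.1))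

/-- one step: the tableau `T` is obtained from `S` by applying one operator `π_i^a` -/
def stepRel (a : Variant) (α β : List ℕ) (S T : ℕ × ℕ → ℕ) : Prop :=
  IsSIT α β T ∧ ∃ i, 1 ≤ i ∧ i ≤ skewSize α β - 1 ∧ piOp a α β i S = T

/-- `T` is obtained from `S` by applying a (possibly empty) sequence of operators `π_i^a`,
all intermediate results being tableaux -/
def reach (a : Variant) (α β : List ℕ) : (ℕ × ℕ → ℕ) → (ℕ × ℕ → ℕ) → Prop :=
  Relation.ReflTransGen (stepRel a α β)

/-- the number of skew cells of `α/β` strictly above row `i` other than column-1 cells -/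
noncomputable def aboveCount (α β : List ℕ) (i : ℕ) : ℕ :=
  ∑ i' ∈ Finset.Ico (i + 1) α.length,
    (if i' < β.length then part α i' - part β i' else part α i' - 1)

/-- the tableau `S^0_{α/β}`: the column-1 cells of `α/β` are filled with `1, …, ℓ(α)-ℓ(β)`
bottom to top, then the remaining cells are filled row by row, top to bottom, left to right,
with consecutive integers -/
noncomputable def S0 (α β : List ℕ) : ℕ × ℕ → ℕ :=
  fun c =>
    if InSkew α β c then
      if c.2 = 0 ∧ β.length ≤ c.1 then c.1 - β.length + 1
      else (α.length - β.length) + aboveCount α β c.1 +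
        (if c.1 < β.length then c.2 - part β c.1 + 1 else c.2)
    else 0

/-- the row superstandard tableau `S^{row}_{α/β}`: rows filled left to right with `1, 2, …, N`,
bottom row first -/
noncomputable def Srow (α β : List ℕ) : ℕ × ℕ → ℕ :=
  fun c =>
    if InSkew α β c then
      (∑ i' ∈ Finset.range c.1, (part α i' - part β i')) + (c.2 - part β c.1 + 1)
    else 0

/-- `c` is read before `c'` in the reading word (rows top to bottom, right to left in a row) -/
def readBefore (c c' : ℕ × ℕ) : Prop :=
  c'.1 < c.1 ∨ (c.1 = c'.1 ∧ c'.2 < c.2)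

/-- the number of inversions of the reading word of a tableau of shape `α/β` -/
noncomputable def invNum (α β : List ℕ) (T : ℕ × ℕ → ℕ) : ℕ :=
  ((skewCells α β ×ˢ skewCells α β).filter
    (fun p => readBefore p.1 p.2 ∧ T p.2 < T p.1)).card

/-- `φ_U(T)`: fill the cells of `β` by `U` and those of `α/β` by `T` with all entries of `T`
shifted up by `m = |β|` -/
noncomputable def phiU (α β : List ℕ) (U T : ℕ × ℕ → ℕ) : ℕ × ℕ → ℕ :=
  fun c => if InDiagram β c then U c else if InSkew α β c then T c + β.sum else 0

/-- restriction `T_{≤ m}` of `T` to entries `≤ m` -/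
def restrLe (m : ℕ) (T : ℕ × ℕ → ℕ) : ℕ × ℕ → ℕ :=
  fun c => if T c ≤ m then T c else 0

/-- restriction `T_{> m}` of `T` to entries `> m` -/
def restrGt (m : ℕ) (T : ℕ × ℕ → ℕ) : ℕ × ℕ → ℕ :=
  fun c => if m < T c then T c else 0

/-- standardisation `std(T_{>m})`: keep the entries `> m` and subtract `m` from each -/
def stdGt (m : ℕ) (T : ℕ × ℕ → ℕ) : ℕ × ℕ → ℕ :=
  fun c => if m < T c then T c - m else 0

/-- `T ∈ X_{α,β}`: `T ∈ SIT(α)` and the entries `> |β|` of `T` occupy exactly the cells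
of `α/β` -/
def memX (α β : List ℕ) (T : ℕ × ℕ → ℕ) : Prop :=
  IsSIT α [] T ∧ ∀ c, InDiagram α c → (β.sum < T c ↔ ¬ InDiagram β c)


/-! ### Basic list/arithmetic lemmas -/

lemma getD_le_sum (l : List ℕ) (i : ℕ) : l.getD i 0 ≤ l.sum := by
  induction l generalizing i with
  | nil => simp
  | cons a t ih =>
    cases i with
    | zero => simp
    | succ n =>
      simp only [List.getD_cons_succ, List.sum_cons]
      exact le_trans (ih n) (Nat.le_add_left _ _)

lemma sum_range_getD (l : List ℕ) :
    ∑ i ∈ Finset.range l.length, l.getD i 0 = l.sum := by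
  induction l with
  | nil => simp
  | cons a t ih =>
    rw [List.length_cons, Finset.sum_range_succ']
    simp only [List.getD_cons_succ, List.getD_cons_zero, List.sum_cons]
    rw [ih, Nat.add_comm]

lemma sum_range_getD_of_le (l : List ℕ) {n : ℕ} (h : l.length ≤ n) :
    ∑ i ∈ Finset.range n, l.getD i 0 = l.sum := by
  rw [← sum_range_getD l]
  refine (Finset.sum_subset (by simpa using Finset.range_subset_range.mpr h) ?_).symm
  intro i _ hi
  simp only [Finset.mem_range, not_lt] at hi
  exact List.getD_eq_default _ _ hi

lemma part_zero_of_ge {l : List ℕ} {i : ℕ} (h : l.length ≤ i) : part l i = 0 :=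
  List.getD_eq_default _ _ h

lemma part_le {α β : List ℕ} (hsub : SubComp β α) (i : ℕ) : part β i ≤ part α i := by
  by_cases h : i < β.length
  · exact hsub.2 i h
  · rw [part_zero_of_ge (le_of_not_gt h)]; exact Nat.zero_le _

/-- prefix sums of row sizes of the skew shape -/
noncomputable def pre (α β : List ℕ) (i : ℕ) : ℕ :=
  ∑ i' ∈ Finset.range i, (part α i' - part β i')

lemma pre_succ (α β : List ℕ) (i : ℕ) :
    pre α β (i + 1) = pre α β i + (part α i - part β i) :=
  Finset.sum_range_succ _ _

lemma pre_mono (α β : List ℕ) {i j : ℕ} (h : i ≤ j) : pre α β i ≤ pre α β j :=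
  Finset.sum_le_sum_of_subset (Finset.range_subset_range.mpr h)

lemma pre_len {α β : List ℕ} (hsub : SubComp β α) :
    pre α β α.length = skewSize α β := by
  have h1 : pre α β α.length + ∑ i ∈ Finset.range α.length, part β i
      = ∑ i ∈ Finset.range α.length, part α i := by
    rw [pre, ← Finset.sum_add_distrib]
    refine Finset.sum_congr rfl fun i _ => ?_
    have := part_le hsub i
    omega
  have h2 : ∑ i ∈ Finset.range α.length, part β i = β.sum :=
    sum_range_getD_of_le β hsub.1
  have h3 : ∑ i ∈ Finset.range α.length, part α i = α.sum :=
    sum_range_getD α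
  unfold skewSize
  omega

lemma inSkew_iff (α β : List ℕ) (c : ℕ × ℕ) :
    InSkew α β c ↔ c.1 < α.length ∧ part β c.1 ≤ c.2 ∧ c.2 < part α c.1 := by
  obtain ⟨i, j⟩ := c
  unfold InSkew InDiagram
  constructor
  · rintro ⟨⟨h1, h2⟩, h3⟩
    refine ⟨h1, ?_, h2⟩
    by_cases hb : i < β.length
    · by_contra h; exact h3 ⟨hb, by omega⟩
    · rw [part_zero_of_ge (le_of_not_gt hb)]; exact Nat.zero_le _
  · rintro ⟨h1, h2, h3⟩
    exact ⟨⟨h1, h3⟩, fun h => absurd h2 (by omega)⟩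

lemma mem_skewCells (α β : List ℕ) (c : ℕ × ℕ) :
    c ∈ skewCells α β ↔ InSkew α β c := by
  unfold skewCells
  simp only [Finset.mem_filter, Finset.mem_product, Finset.mem_range]
  constructor
  · exact fun h => h.2
  · intro h
    have h' := (inSkew_iff α β c).mp h
    exact ⟨⟨h'.1, lt_of_lt_of_le h'.2.2 (le_trans (getD_le_sum α c.1) (Nat.le_succ _))⟩, h⟩

/-! ### lex order on cells -/

def lexLt (c c' : ℕ × ℕ) : Prop := c.1 < c'.1 ∨ (c.1 = c'.1 ∧ c.2 < c'.2)

lemma lex_trichotomy (c c' : ℕ × ℕ) : lexLt c c' ∨ c = c' ∨ lexLt c' c := by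
  obtain ⟨a, b⟩ := c; obtain ⟨a', b'⟩ := c'
  simp only [lexLt, Prod.mk.injEq]
  omega

/-! ### the row superstandard tableau -/

lemma srow_eq {α β : List ℕ} {c : ℕ × ℕ} (hc : InSkew α β c) :
    Srow α β c = pre α β c.1 + (c.2 - part β c.1 + 1) := by
  rw [Srow, if_pos hc]; rfl

lemma srow_bounds {α β : List ℕ} (hsub : SubComp β α) {c : ℕ × ℕ} (hc : InSkew α β c) :
    pre α β c.1 < Srow α β c ∧ Srow α β c ≤ pre α β (c.1 + 1) := by
  rw [srow_eq hc, pre_succ]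
  obtain ⟨h1, h2, h3⟩ := (inSkew_iff α β c).mp hc
  have := part_le hsub c.1
  omega

lemma srow_lexmono {α β : List ℕ} (hsub : SubComp β α) {c c' : ℕ × ℕ}
    (hc : InSkew α β c) (hc' : InSkew α β c') (h : lexLt c c') :
    Srow α β c < Srow α β c' := by
  obtain ⟨h1, h2, h3⟩ := (inSkew_iff α β c).mp hc
  obtain ⟨h1', h2', h3'⟩ := (inSkew_iff α β c').mp hc'
  rcases h with h | ⟨hr, hcol⟩
  · calc Srow α β c ≤ pre α β (c.1 + 1) := (srow_bounds hsub hc).2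
      _ ≤ pre α β c'.1 := pre_mono α β h
      _ < Srow α β c' := (srow_bounds hsub hc').1
  · rw [srow_eq hc, srow_eq hc', hr]
    have h2'' : part β c'.1 ≤ c.2 := by rw [← hr]; exact h2
    omega

lemma srow_isSET {α β : List ℕ} (hsub : SubComp β α) : IsSET α β (Srow α β) := by
  have hinj : ∀ c c', InSkew α β c → InSkew α β c' → Srow α β c = Srow α β c' → c = c' := by
    intro c c' hc hc' h
    rcases lex_trichotomy c c' with ht | ht | ht
    · exact absurd h (Nat.ne_of_lt (srow_lexmono hsub hc hc' ht))
    · exact ht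
    · exact absurd h.symm (Nat.ne_of_lt (srow_lexmono hsub hc' hc ht))
  have hsurj : ∀ n, n ≤ α.length → ∀ v, 1 ≤ v → v ≤ pre α β n →
      ∃ c, InSkew α β c ∧ Srow α β c = v := by
    intro n
    induction n with
    | zero => intro _ v h1 h2; simp only [pre, Finset.range_zero, Finset.sum_empty] at h2; omega
    | succ n ih =>
      intro hn v h1 h2
      by_cases hv : v ≤ pre α β n
      · exact ih (by omega) v h1 hv
      · push_neg at hv
        rw [pre_succ] at h2
        have hle := part_le hsub n
        refine ⟨(n, part β n + (v - pre α β n - 1)), ?_, ?_⟩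
        · rw [inSkew_iff]
          refine ⟨by omega, by simp, by simp; omega⟩
        · rw [srow_eq]
          · simp only
            omega
          · rw [inSkew_iff]
            refine ⟨by omega, by simp, by simp; omega⟩
  refine ⟨⟨⟨?_, ?_, hinj, ?_⟩, ?_, ?_⟩, ?_⟩
  · intro c hc; rw [Srow, if_neg hc]
  · intro c hc
    rw [Finset.mem_Icc]
    have hb := srow_bounds hsub hc
    have hlen : c.1 + 1 ≤ α.length := ((inSkew_iff α β c).mp hc).1
    have := pre_mono α β hlen
    rw [pre_len hsub] at this
    omega
  · intro v hv
    rw [Finset.mem_Icc] at hv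
    exact hsurj α.length le_rfl v hv.1 (by rw [pre_len hsub]; exact hv.2)
  · intro i j j' hjj hc hc'
    exact srow_lexmono hsub hc hc' (Or.inr ⟨rfl, hjj⟩)
  · intro i i' hii hc hc'
    exact srow_lexmono hsub hc hc' (Or.inl hii)
  · intro i i' j hii hc hc'
    exact srow_lexmono hsub hc hc' (Or.inl hii)

/-! ### rank characterisation: a lex-monotone standard filling equals Srow -/

lemma rank_eq {α β : List ℕ} {T : ℕ × ℕ → ℕ}
    (hT : IsStdOn α β (Finset.Icc 1 (skewSize α β)) T)
    (hmono : ∀ c c', InSkew α β c → InSkew α β c' → lexLt c c' → T c < T c')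
    {c : ℕ × ℕ} (hc : InSkew α β c) :
    T c = ((skewCells α β).filter (fun d => lexLt d c ∨ d = c)).card := by
  have hTc := hT.mem c hc
  rw [Finset.mem_Icc] at hTc
  have hcard : ((skewCells α β).filter (fun d => lexLt d c ∨ d = c)).card
      = (Finset.Icc 1 (T c)).card := by
    refine Finset.card_bij (fun d _ => T d) ?_ ?_ ?_
    · intro d hd
      rw [Finset.mem_filter, mem_skewCells] at hd
      obtain ⟨hds, hdl⟩ := hd
      have := hT.mem d hds
      rw [Finset.mem_Icc] at this ⊢
      rcases hdl with h | h
      · exact ⟨this.1, le_of_lt (hmono d c hds hc h)⟩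
      · exact ⟨this.1, le_of_eq (congrArg T h)⟩
    · intro d hd d' hd' h
      rw [Finset.mem_filter, mem_skewCells] at hd hd'
      exact hT.inj d d' hd.1 hd'.1 h
    · intro v hv
      rw [Finset.mem_Icc] at hv
      obtain ⟨d, hds, hdv⟩ := hT.surj v (Finset.mem_Icc.mpr ⟨hv.1, le_trans hv.2 hTc.2⟩)
      refine ⟨d, ?_, hdv⟩
      rw [Finset.mem_filter, mem_skewCells]
      refine ⟨hds, ?_⟩
      rcases lex_trichotomy d c with h | h | h
      · exact Or.inl h
      · exact Or.inr h
      · have := hmono c d hc hds h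
        omega
  rw [hcard, Nat.card_Icc]
  omega

lemma eq_srow_of_lexmono {α β : List ℕ} (hsub : SubComp β α) {T : ℕ × ℕ → ℕ}
    (hT : IsStdOn α β (Finset.Icc 1 (skewSize α β)) T)
    (hmono : ∀ c c', InSkew α β c → InSkew α β c' → lexLt c c' → T c < T c') :
    T = Srow α β := by
  have hS := srow_isSET hsub
  funext c
  by_cases hc : InSkew α β c
  · rw [rank_eq hT hmono hc,
      rank_eq hS.1.1 (fun c c' hc hc' h => srow_lexmono hsub hc hc' h) hc]
  · rw [hT.zero_off c hc, Srow, if_neg hc]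

/-! ### swapping `i` and `i+1` in a standard extended tableau -/

lemma swap_lt {T : ℕ × ℕ → ℕ} {i : ℕ} {d d' : ℕ × ℕ}
    (hlt : T d < T d') (hA : ¬(T d = i ∧ T d' = i + 1)) :
    swapEntries i T d < swapEntries i T d' := by
  unfold swapEntries; split_ifs <;> omega

section Swap

variable {α β : List ℕ} {T : ℕ × ℕ → ℕ} {i : ℕ} {c c' : ℕ × ℕ}

/-- the standing hypotheses for the swap -/
structure SwapSetup (α β : List ℕ) (T : ℕ × ℕ → ℕ) (i : ℕ) (c c' : ℕ × ℕ) : Prop where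
  hT : IsSET α β T
  hi1 : 1 ≤ i
  hiN : i + 1 ≤ skewSize α β
  hc : InSkew α β c
  hc' : InSkew α β c'
  hTc : T c = i
  hTc' : T c' = i + 1
  hrow : c'.1 < c.1

lemma SwapSetup.pair_eq (h : SwapSetup α β T i c c') {d d' : ℕ × ℕ}
    (hd : InSkew α β d) (hd' : InSkew α β d')
    (h1 : T d = i) (h2 : T d' = i + 1) : d = c ∧ d' = c' :=
  ⟨h.hT.1.1.inj d c hd h.hc (h1.trans h.hTc.symm),
   h.hT.1.1.inj d' c' hd' h.hc' (h2.trans h.hTc'.symm)⟩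

lemma SwapSetup.swap_at_c (h : SwapSetup α β T i c c') :
    swapEntries i T c = i + 1 := by
  unfold swapEntries; rw [if_pos h.hTc]

lemma SwapSetup.swap_at_c' (h : SwapSetup α β T i c c') :
    swapEntries i T c' = i := by
  unfold swapEntries
  rw [if_neg (by rw [h.hTc']; omega), if_pos h.hTc']

lemma SwapSetup.swap_other (h : SwapSetup α β T i c c') {d : ℕ × ℕ}
    (hd : InSkew α β d) (hdc : d ≠ c) (hdc' : d ≠ c') :
    swapEntries i T d = T d := by
  unfold swapEntries
  rw [if_neg, if_neg]
  · intro he; exact hdc' (h.hT.1.1.inj d c' hd h.hc' (he.trans h.hTc'.symm))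
  · intro he; exact hdc (h.hT.1.1.inj d c hd h.hc (he.trans h.hTc.symm))

lemma SwapSetup.isSET (h : SwapSetup α β T i c c') : IsSET α β (swapEntries i T) := by
  obtain ⟨⟨⟨hzero, hmem, hinj, hsurj⟩, hrows, hfc⟩, hcols⟩ := h.hT
  have hcne : c.1 ≠ c'.1 := by have := h.hrow; omega
  have hcols' : ColsStrict α β (swapEntries i T) := by
    intro r r' j hrr hd hd'
    have hlt := hcols r r' j hrr hd hd'
    by_cases hA : T (r, j) = i ∧ T (r', j) = i + 1
    · obtain ⟨e1, e2⟩ := h.pair_eq hd hd' hA.1 hA.2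
      exfalso
      have : c.1 = r := by rw [← e1]
      have : c'.1 = r' := by rw [← e2]
      have := h.hrow
      omega
    · exact swap_lt hlt hA
  refine ⟨⟨⟨?_, ?_, ?_, ?_⟩, ?_, ?_⟩, hcols'⟩
  · intro d hd
    have h0 := hzero d hd
    unfold swapEntries
    rw [h0, if_neg (by have := h.hi1; omega), if_neg (by omega)]
  · intro d hd
    have := hmem d hd
    rw [Finset.mem_Icc] at this ⊢
    unfold swapEntries
    have := h.hi1; have := h.hiN
    split_ifs <;> omega
  · intro d d' hd hd' hdd
    apply hinj d d' hd hd'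
    unfold swapEntries at hdd
    split_ifs at hdd <;> omega
  · intro v hv
    rw [Finset.mem_Icc] at hv
    by_cases hvi : v = i
    · exact ⟨c', h.hc', by rw [h.swap_at_c', hvi]⟩
    by_cases hvi' : v = i + 1
    · exact ⟨c, h.hc, by rw [h.swap_at_c, hvi']⟩
    obtain ⟨d, hd, hdv⟩ := hsurj v (Finset.mem_Icc.mpr hv)
    refine ⟨d, hd, ?_⟩
    unfold swapEntries
    rw [hdv, if_neg hvi, if_neg hvi']
  · intro r j j' hjj hd hd'
    have hlt := hrows r j j' hjj hd hd'
    by_cases hA : T (r, j) = i ∧ T (r, j') = i + 1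
    · obtain ⟨e1, e2⟩ := h.pair_eq hd hd' hA.1 hA.2
      exfalso
      apply hcne
      rw [← e1, ← e2]
    · exact swap_lt hlt hA
  · intro r r' hrr hd hd'
    exact hcols' r r' 0 hrr hd hd'

lemma SwapSetup.mem_des (h : SwapSetup α β T i c c') : i ∈ Des .rdI α β T := by
  unfold Des
  rw [Finset.mem_filter, Finset.mem_Icc]
  have := h.hi1; have := h.hiN
  exact ⟨⟨h.hi1, by omega⟩, c, c', h.hc, h.hc', h.hTc, h.hTc', le_of_lt h.hrow⟩

lemma SwapSetup.piOp_eq (h : SwapSetup α β T i c c') :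
    piOp .rdI α β i T = swapEntries i T := by
  unfold piOp
  rw [if_pos h.mem_des, if_pos h.isSET.1]

/-! ### the measure -/

end Swap

/-- the measure: weighted sum of entries by their row index -/
noncomputable def mes (α β : List ℕ) (T : ℕ × ℕ → ℕ) : ℕ :=
  ∑ d ∈ skewCells α β, T d * d.1

lemma mes_le {α β : List ℕ} {T : ℕ × ℕ → ℕ} (hT : IsSET α β T) :
    mes α β T ≤ (skewCells α β).card * (skewSize α β * α.length) := by
  rw [← smul_eq_mul]
  apply Finset.sum_le_card_nsmul
  intro d hd
  rw [mem_skewCells] at hd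
  have h1 := hT.1.1.mem d hd
  rw [Finset.mem_Icc] at h1
  have h2 := ((inSkew_iff α β d).mp hd).1
  exact Nat.mul_le_mul h1.2 (le_of_lt h2)

lemma SwapSetup.mes_lt {α β : List ℕ} {T : ℕ × ℕ → ℕ} {i : ℕ} {c c' : ℕ × ℕ}
    (h : SwapSetup α β T i c c') :
    mes α β T < mes α β (swapEntries i T) := by
  have hne : c' ≠ c := by intro he; have := h.hrow; rw [he] at this; omega
  have hcm : c ∈ skewCells α β := (mem_skewCells α β c).mpr h.hc
  have hcm' : c' ∈ (skewCells α β).erase c :=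
    Finset.mem_erase.mpr ⟨hne, (mem_skewCells α β c').mpr h.hc'⟩
  have expand : ∀ f : ℕ × ℕ → ℕ,
      ∑ d ∈ skewCells α β, f d
        = f c + (f c' + ∑ d ∈ ((skewCells α β).erase c).erase c', f d) := by
    intro f
    rw [Finset.add_sum_erase _ f hcm', Finset.add_sum_erase _ f hcm]
  unfold mes
  rw [expand (fun d => T d * d.1), expand (fun d => swapEntries i T d * d.1)]
  have hsame : ∑ d ∈ ((skewCells α β).erase c).erase c', swapEntries i T d * d.1
      = ∑ d ∈ ((skewCells α β).erase c).erase c', T d * d.1 := by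
    refine Finset.sum_congr rfl fun d hd => ?_
    rw [Finset.mem_erase, Finset.mem_erase, mem_skewCells] at hd
    rw [h.swap_other hd.2.2 hd.2.1 hd.1]
  rw [hsame, h.swap_at_c, h.swap_at_c', h.hTc, h.hTc']
  have e1 : (i + 1) * c.1 = i * c.1 + c.1 := by ring
  have e2 : (i + 1) * c'.1 = i * c'.1 + c'.1 := by ring
  rw [e1, e2]
  have := h.hrow
  set p := i * c.1
  set q := i * c'.1
  omega
/-! ### existence of a swap when `T ≠ Srow` -/

lemma exists_swapSetup {α β : List ℕ} (hsub : SubComp β α) {T : ℕ × ℕ → ℕ}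
    (hT : IsSET α β T) (hne : T ≠ Srow α β) :
    ∃ i c c', SwapSetup α β T i c c' := by
  by_contra hbad
  push_neg at hbad
  apply hne
  apply eq_srow_of_lexmono hsub hT.1.1
  have nobad : ∀ i cc cc', 1 ≤ i → i + 1 ≤ skewSize α β → InSkew α β cc → InSkew α β cc' →
      T cc = i → T cc' = i + 1 → cc.1 ≤ cc'.1 := by
    intro i cc cc' h1 h2 hcc hcc' e1 e2
    by_contra hlt
    exact hbad i cc cc' ⟨hT, h1, h2, hcc, hcc', e1, e2, by omega⟩
  have hmonorow : ∀ k u, 1 ≤ u → u + k ≤ skewSize α β →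
      ∀ cc cc', InSkew α β cc → InSkew α β cc' → T cc = u → T cc' = u + k →
      cc.1 ≤ cc'.1 := by
    intro k
    induction k with
    | zero =>
      intro u h1 h2 cc cc' hcc hcc' e1 e2
      have : cc = cc' := hT.1.1.inj _ _ hcc hcc' (by omega)
      rw [this]
    | succ k ih =>
      intro u h1 h2 cc cc' hcc hcc' e1 e2
      obtain ⟨d, hd, hdv⟩ := hT.1.1.surj (u + k) (Finset.mem_Icc.mpr ⟨by omega, by omega⟩)
      have step := nobad (u + k) d cc' (by omega) (by omega) hd hcc' hdv (by omega)
      have base := ih u (by omega) (by omega) cc d hcc hd e1 hdv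
      omega
  rintro ⟨a, b⟩ ⟨a', b'⟩ hd hd' hlex
  by_contra hge
  push_neg at hge
  have m1 := hT.1.1.mem _ hd
  have m2 := hT.1.1.mem _ hd'
  rw [Finset.mem_Icc] at m1 m2
  rcases Nat.lt_or_ge (T (a', b')) (T (a, b)) with hlt | hle
  · have hrow := hmonorow (T (a, b) - T (a', b')) (T (a', b')) m2.1 (by omega)
      (a', b') (a, b) hd' hd rfl (by omega)
    simp only at hrow
    rcases hlex with h | ⟨h1, h2⟩
    · simp only at h; omega
    · simp only at h1 h2
      subst h1
      have := hT.1.2.1 a b b' h2 hd hd'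
      omega
  · have heq : T (a, b) = T (a', b') := by omega
    have := hT.1.1.inj _ _ hd hd' heq
    rw [Prod.mk.injEq] at this
    rcases hlex with h | ⟨h1, h2⟩
    · simp only at h; omega
    · simp only at h1 h2; omega

/-! ### the chain construction -/

lemma chain_aux {α β : List ℕ} (hsub : SubComp β α) :
    ∀ k (T : ℕ × ℕ → ℕ), IsSET α β T →
    (skewCells α β).card * (skewSize α β * α.length) - mes α β T ≤ k →
    ∃ (r : ℕ) (js : Fin r → ℕ) (Ts : Fin (r + 1) → ℕ × ℕ → ℕ),
      Ts 0 = T ∧ Ts (Fin.last r) = Srow α β ∧ (∀ i, IsSET α β (Ts i)) ∧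
      (∀ i : Fin r, mes α β (Ts i.castSucc) < mes α β (Ts i.succ)) ∧
      (∀ i : Fin r, 1 ≤ js i ∧ js i ≤ skewSize α β - 1 ∧
        piOp .rdI α β (js i) (Ts i.castSucc) = Ts i.succ) := by
  intro k
  induction k with
  | zero =>
    intro T hT hk
    by_cases he : T = Srow α β
    · subst he
      exact ⟨0, Fin.elim0, fun _ => Srow α β, rfl, rfl, fun _ => srow_isSET hsub,
        fun i => i.elim0, fun i => i.elim0⟩
    · obtain ⟨i, c, c', hS⟩ := exists_swapSetup hsub hT he
      have h1 := hS.mes_lt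
      have h2 := mes_le hS.isSET
      omega
  | succ k ih =>
    intro T hT hk
    by_cases he : T = Srow α β
    · subst he
      exact ⟨0, Fin.elim0, fun _ => Srow α β, rfl, rfl, fun _ => srow_isSET hsub,
        fun i => i.elim0, fun i => i.elim0⟩
    · obtain ⟨i, c, c', hS⟩ := exists_swapSetup hsub hT he
      have hT' := hS.isSET
      have hlt := hS.mes_lt
      have hb := mes_le hT'
      obtain ⟨r, js, Ts, h0, hlast, hset, hmes, hstep⟩ :=
        ih (swapEntries i T) hT' (by omega)
      refine ⟨r + 1, Fin.cons i js, Fin.cons T Ts, ?_, ?_, ?_, ?_, ?_⟩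
      · simp
      · rw [← Fin.succ_last, Fin.cons_succ]; exact hlast
      · intro j
        induction j using Fin.cases with
        | zero => simpa using hT
        | succ j => rw [Fin.cons_succ]; exact hset j
      · intro j
        induction j using Fin.cases with
        | zero =>
          simp only [Fin.castSucc_zero, Fin.cons_zero, Fin.cons_succ, h0]
          exact hlt
        | succ j =>
          rw [← Fin.succ_castSucc, Fin.cons_succ, Fin.cons_succ]
          exact hmes j
      · intro j
        induction j using Fin.cases with
        | zero =>
          simp only [Fin.castSucc_zero, Fin.cons_zero, Fin.cons_succ, h0]
          have hi1 := hS.hi1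
          have hiN := hS.hiN
          exact ⟨hi1, by omega, hS.piOp_eq⟩
        | succ j =>
          rw [← Fin.succ_castSucc, Fin.cons_succ, Fin.cons_succ, Fin.cons_succ]
          exact hstep j

/-- `S^{row}_{α/β} ∈ SET(α/β)`, and every tableau of `SET(α/β)` reaches
`S^{row}_{α/β}` by a saturated chain of `rdI`-operators staying inside `SET(α/β)`; hence
`S^{row}_{α/β}` is the unique maximal element of the subposet induced on `SET(α/β)`. -/
theorem skew_SET_Srow_unique_maximal (α β : List ℕ)
    (hα : IsComposition α) (hβ : IsComposition β) (hsub : SubComp β α)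
    (hN : 1 ≤ skewSize α β) :
    IsSET α β (Srow α β) ∧
    (∀ T, IsSET α β T → T ≠ Srow α β →
      ∃ (r : ℕ) (js : Fin r → ℕ) (Ts : Fin (r + 1) → ℕ × ℕ → ℕ),
        Ts 0 = T ∧ Ts (Fin.last r) = Srow α β ∧
        (∀ i, IsSET α β (Ts i)) ∧ Function.Injective Ts ∧
        (∀ i : Fin r, 1 ≤ js i ∧ js i ≤ skewSize α β - 1 ∧
          piOp .rdI α β (js i) (Ts i.castSucc) = Ts i.succ)) ∧
    (∀ T, IsSET α β T →
      (∀ S, IsSET α β S → reach .rdI α β T S → S = T) → T = Srow α β) := by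
  refine ⟨srow_isSET hsub, ?_, ?_⟩
  · intro T hT _
    obtain ⟨r, js, Ts, h0, hlast, hset, hmes, hstep⟩ :=
      chain_aux hsub ((skewCells α β).card * (skewSize α β * α.length) - mes α β T)
        T hT le_rfl
    have hsm : StrictMono (fun j : Fin (r + 1) => mes α β (Ts j)) :=
      Fin.strictMono_iff_lt_succ.mpr hmes
    refine ⟨r, js, Ts, h0, hlast, hset, ?_, hstep⟩
    intro a b hab
    exact hsm.injective (congrArg (mes α β) hab)
  · intro T hT hmax
    by_contra hne
    obtain ⟨i, c, c', hS⟩ := exists_swapSetup hsub hT hne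
    have hstep : stepRel .rdI α β T (swapEntries i T) := by
      refine ⟨hS.isSET.1, i, hS.hi1, ?_, hS.piOp_eq⟩
      have := hS.hiN
      omega
    have heq := hmax (swapEntries i T) hS.isSET (Relation.ReflTransGen.single hstep)
    have := hS.mes_lt
    rw [heq] at this
    omega

end ImmaculateSkew
end

section
/- Let β ⊆ α be compositions with N = |α|−|β| ≥ 1, and let SIT(α/β) \ SET(α/β) denote the set of tableaux in SIT(α/β) that have at least one column whose entries do not increase from bottom to top. If S ∈ SIT(α/β) \ SET(α/β) and 1 ≤ i ≤ N−1, then π_i^{dI}(S) ∈ (SIT(α/β) \ SET(α/β)) ∪ {0}; in particular, if i ∈ Des_dI(S) and s_i(S) ∈ SIT(α/β), then s_i(S) ∉ SET(α/β). Hence the span of SIT(α/β) \ SET(α/β) is closed under the operators π_1^{dI}, …, π_{N−1}^{dI}. -/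
open scoped Classical

namespace ImmaculateSkew

/-- the set `NSET(α/β) ∩ SIT(α/β) = SIT(α/β) \ SET(α/β)` is closed under the
operators `π_i^{dI}`: the image of a tableau with a non-increasing column is again such a
tableau, or `0`. -/
theorem skew_NSET_closed_dI (α β : List ℕ)
    (hα : IsComposition α) (hβ : IsComposition β) (hsub : SubComp β α)
    (hN : 1 ≤ skewSize α β) :
    ∀ S, IsSIT α β S → ¬ IsSET α β S → ∀ i, 1 ≤ i → i ≤ skewSize α β - 1 →
      ((IsSIT α β (piOp .dI α β i S) ∧ ¬ IsSET α β (piOp .dI α β i S)) ∨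
        piOp .dI α β i S = (fun _ => 0)) ∧
      (i ∈ Des .dI α β S → IsSIT α β (swapEntries i S) → ¬ IsSET α β (swapEntries i S)) := by
  intro S hSIT hNSET i hi1 hi2
  have hviol : ∃ r r' j, r < r' ∧ InSkew α β (r,j) ∧ InSkew α β (r',j) ∧ S (r',j) < S (r,j) := by
    by_contra h
    push_neg at h
    apply hNSET
    refine ⟨hSIT, ?_⟩
    intro r r' j hlt ha hb
    have hle := h r r' j hlt ha hb
    rcases lt_or_eq_of_le hle with h' | h'
    · exact h'
    · exfalso
      have := hSIT.1.inj _ _ ha hb h'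
      simp only [Prod.mk.injEq] at this
      omega
  have key : i ∈ Des .dI α β S → IsSIT α β (swapEntries i S) → ¬ IsSET α β (swapEntries i S) := by
    intro hdes hsw hset
    obtain ⟨r, r', j, hlt, ha, hb, hvi⟩ := hviol
    have hcs := hset.2 r r' j hlt ha hb
    simp only [swapEntries] at hcs
    have hSa : S (r,j) = i + 1 ∧ S (r',j) = i := by
      split_ifs at hcs <;> omega
    obtain ⟨hSa1, hSa2⟩ := hSa
    simp only [Des, Finset.mem_filter] at hdes
    obtain ⟨-, c, c', hc, hc', hci, hci1, hrel⟩ := hdes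
    have e1 : c = (r', j) := hSIT.1.inj _ _ hc hb (by rw [hci, hSa2])
    have e2 : c' = (r, j) := hSIT.1.inj _ _ hc' ha (by rw [hci1, hSa1])
    simp only [rowRel] at hrel
    rw [e1, e2] at hrel
    simp at hrel
    omega
  constructor
  · by_cases hdes : i ∈ Des .dI α β S
    · by_cases hsw : IsSIT α β (swapEntries i S)
      · left
        have hp : piOp .dI α β i S = swapEntries i S := by simp [piOp, hdes, hsw]
        rw [hp]
        exact ⟨hsw, key hdes hsw⟩
      · right
        simp [piOp, hdes, hsw]
    · left
      have hp : piOp .dI α β i S = S := by simp [piOp, hdes]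
      rw [hp]
      exact ⟨hSIT, hNSET⟩
  · exact key

end ImmaculateSkew
end
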